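/- Let G = ⟨σ, τ⟩ ≅ D_{4n} be the dihedral group of order 8n and let M′′ = ℤ·y₁ ⊕ ℤ·y₂ with σ : y₁ ↔ y₂ and τ : y₁ ↦ −y₂, y₂ ↦ −y₁. Then H¹(⟨σ⟩, M′′) = 0 and H¹(G, M′′) ≅ ℤ/2ℤ. -/

import Mathlib

/-!
A 1-cocycle on a group generated by `σ` and `τ` is determined by its values at `σ` and `τ`.
Since `σ²` acts trivially on `M''` and `σ ^ (4n) = 1`, expanding `f (σ ^ (4n)) = 0` gives
`2n • (σ + 1) (f σ) = 0`, so `f σ` lies on the line `ℤ (y₁ - y₂)`; as `τ` acts as minus the swap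
`σ`, the relation `τ² = 1` puts `f τ` on the line `ℤ (y₁ + y₂)`. Writing `f σ = α (y₁ - y₂)` and
`f τ = β (y₁ + y₂)`, the coboundary of `p y₁ + q y₂` has `(α, β) = (q - p, -(p + q))`, so `f` is
a coboundary exactly when `α + β` is even, and on `⟨σ⟩` alone every cocycle is a coboundary.
The odd class is realised by `g ↦ (g w - w) / 2` for `w = y₁ - y₂`, on which `G` acts by signs.
-/

open groupCohomology

theorem Representation.apply_eq_or_eq_neg_of_closure_eq_top {k G V : Type} [CommRing k]
    [Group G] [AddCommGroup V] [Module k V] (ρ : Representation k G V) {S : Set G}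
    (hS : Subgroup.closure S = ⊤) {w : V} (h : ∀ s ∈ S, ρ s w = w ∨ ρ s w = -w) (g : G) :
    ρ g w = w ∨ ρ g w = -w := by
  have hg : g ∈ Subgroup.closure S := hS ▸ Subgroup.mem_top g
  induction hg using Subgroup.closure_induction with
  | mem s hs => exact h s hs
  | one => simp
  | mul a c _ _ ha hc =>
    rw [map_mul, Module.End.mul_apply]
    rcases hc with hc | hc <;> rcases ha with ha | ha <;> simp [ha, hc]
  | inv a _ ha =>
    have hw := ρ.inv_self_apply a w
    rcases ha with ha | ha
    · exact .inl (by rwa [ha] at hw)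
    · exact .inr (by rwa [ha, map_neg, neg_eq_iff_eq_neg] at hw)

namespace groupCohomology

variable {k G : Type} [CommRing k] [Group G] {A : Rep k G}

theorem cocycles₁_map_mul (f : cocycles₁ A) (g h : G) : f (g * h) = A.ρ g (f h) + f g :=
  (mem_cocycles₁_iff f).1 f.2 g h

theorem cocycles₁_ext_of_closure_eq_top {S : Set G} (hS : Subgroup.closure S = ⊤)
    {f₁ f₂ : cocycles₁ A} (h : ∀ s ∈ S, f₁ s = f₂ s) : f₁ = f₂ := by
  refine cocycles₁_ext fun g => ?_
  have hg : g ∈ Subgroup.closure S := hS ▸ Subgroup.mem_top g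
  induction hg using Subgroup.closure_induction with
  | mem s hs => exact h s hs
  | one => simp
  | mul a c _ _ ha hc => rw [cocycles₁_map_mul f₁, cocycles₁_map_mul f₂, ha, hc]
  | inv a _ ha =>
    rw [← A.ρ.inv_self_apply a (f₁ a⁻¹), ← A.ρ.inv_self_apply a (f₂ a⁻¹), cocycles₁_map_inv,
      cocycles₁_map_inv, ha]

theorem mem_coboundaries₁_of_closure_eq_top {S : Set G} (hS : Subgroup.closure S = ⊤)
    (f : cocycles₁ A) (x : A) (h : ∀ s ∈ S, f s = A.ρ s x - x) : ⇑f ∈ coboundaries₁ A := by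
  obtain rfl : f = ⟨d₀₁ A x, d₀₁_apply_mem_cocycles₁ x⟩ :=
    cocycles₁_ext_of_closure_eq_top hS h
  exact ⟨x, rfl⟩

theorem cocycles₁_map_pow_of_ρ_eq_one (f : cocycles₁ A) {g : G} (hg : A.ρ g = 1) (m : ℕ) :
    f (g ^ m) = m • f g := by
  induction m with
  | zero => simp
  | succ m ih => rw [pow_succ', cocycles₁_map_mul, hg, ih, Module.End.one_apply, succ_nsmul]

theorem nsmul_ρ_apply_add_eq_zero (f : cocycles₁ A) {g : G} {m : ℕ} (hg : g ^ (2 * m) = 1)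
    (hg2 : A.ρ (g ^ 2) = 1) : m • (A.ρ g (f g) + f g) = 0 := by
  rw [← cocycles₁_map_mul, ← sq, ← cocycles₁_map_pow_of_ρ_eq_one f hg2, ← pow_mul, hg,
    cocycles₁_map_one]

open Classical in
theorem ite_mem_cocycles₁ {w : A} (hw : ∀ g, A.ρ g w = w ∨ A.ρ g w = -w) (hw0 : w ≠ -w) :
    (fun g => if A.ρ g w = w then 0 else -w) ∈ cocycles₁ A := by
  rw [mem_cocycles₁_iff]
  intro g h
  rw [map_mul, Module.End.mul_apply]
  rcases hw h with hh | hh <;> rcases hw g with hg | hg <;> simp [hh, hg, hw0.symm]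

end groupCohomology

section SwapOfBasis

variable {R M : Type} [CommRing R] [AddCommGroup M] [Module R M] (b : Module.Basis (Fin 2) R M)
  {s : M →ₗ[R] M}

theorem Module.Basis.repr_zero_smul_add_repr_one_smul (x : M) :
    b.repr x 0 • b 0 + b.repr x 1 • b 1 = x := by
  rw [← Fin.sum_univ_two (fun i => b.repr x i • b i), b.sum_repr]

theorem swap_apply_sub_self (hs0 : s (b 0) = b 1) (hs1 : s (b 1) = b 0) (x : M) :
    s x - x = (b.repr x 1 - b.repr x 0) • (b 0 - b 1) := by
  conv_lhs => rw [← b.repr_zero_smul_add_repr_one_smul x]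
  simp only [map_add, map_smul, hs0, hs1]
  module

theorem swap_apply_add_self (hs0 : s (b 0) = b 1) (hs1 : s (b 1) = b 0) (x : M) :
    s x + x = (b.repr x 0 + b.repr x 1) • (b 0 + b 1) := by
  conv_lhs => rw [← b.repr_zero_smul_add_repr_one_smul x]
  simp only [map_add, map_smul, hs0, hs1]
  module

theorem eq_smul_sub_of_swap_apply_add_self_eq_zero (hs0 : s (b 0) = b 1)
    (hs1 : s (b 1) = b 0) {u : M} (hu : s u + u = 0) : u = b.repr u 0 • (b 0 - b 1) := by
  have h := congrArg (fun v => b.repr v 0) (swap_apply_add_self b hs0 hs1 u)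
  simp [hu] at h
  conv_lhs => rw [← b.repr_zero_smul_add_repr_one_smul u, eq_neg_of_add_eq_zero_right h.symm]
  module

theorem eq_smul_add_of_swap_apply_eq_self (hs0 : s (b 0) = b 1) (hs1 : s (b 1) = b 0)
    {u : M} (hu : s u = u) : u = b.repr u 0 • (b 0 + b 1) := by
  have h := congrArg (fun v => b.repr v 0) (swap_apply_sub_self b hs0 hs1 u)
  simp [hu] at h
  conv_lhs => rw [← b.repr_zero_smul_add_repr_one_smul u, sub_eq_zero.1 h.symm]
  module

end SwapOfBasis

section DihedralLattice

variable {G M : Type} [Group G] [AddCommGroup M] (b : Module.Basis (Fin 2) ℤ M)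
  {ρ : Representation ℤ G M}

theorem cocycles₁_apply_eq_smul_sub_of_swap {n : ℕ} (hn : n ≠ 0) {g : G}
    (hg : g ^ (4 * n) = 1) (hg0 : ρ g (b 0) = b 1) (hg1 : ρ g (b 1) = b 0)
    (f : cocycles₁ (Rep.of ρ)) : f g = b.repr (f g) 0 • (b 0 - b 1) := by
  have hsq : (Rep.of ρ).ρ (g ^ 2) = 1 := b.ext (by simp [Fin.forall_fin_two, sq, hg0, hg1])
  have h := nsmul_ρ_apply_add_eq_zero f (m := 2 * n) (by rwa [← mul_assoc]) hsq
  rw [← natCast_zsmul, b.smul_eq_zero] at h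
  exact eq_smul_sub_of_swap_apply_add_self_eq_zero b hg0 hg1 (h.resolve_left (by positivity))

theorem cocycles₁_apply_eq_smul_add_of_neg_swap {t : G} (ht : t ^ 2 = 1)
    (ht0 : ρ t (b 0) = -b 1) (ht1 : ρ t (b 1) = -b 0) (f : cocycles₁ (Rep.of ρ)) :
    f t = b.repr (f t) 0 • (b 0 + b 1) := by
  have h := nsmul_ρ_apply_add_eq_zero f (m := 1) (by rwa [mul_one]) (by rw [ht, map_one])
  refine eq_smul_add_of_swap_apply_eq_self b (s := -ρ t) (by simp [ht0]) (by simp [ht1]) ?_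
  rw [one_smul] at h
  simpa [neg_eq_iff_add_eq_zero] using h

theorem mem_coboundaries₁_zpowers_of_swap {n : ℕ} (hn : n ≠ 0) {g : G} (hg : g ^ (4 * n) = 1)
    (hg0 : ρ g (b 0) = b 1) (hg1 : ρ g (b 1) = b 0)
    (f : cocycles₁ (Rep.of (ρ.comp (Subgroup.zpowers g).subtype))) :
    ⇑f ∈ coboundaries₁ (Rep.of (ρ.comp (Subgroup.zpowers g).subtype)) := by
  let g' : Subgroup.zpowers g := ⟨g, Subgroup.mem_zpowers g⟩
  have hgen : Subgroup.closure {g'} = ⊤ := by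
    rw [eq_top_iff]
    rintro ⟨_, j, rfl⟩ -
    exact Subgroup.mem_closure_singleton.2 ⟨j, Subtype.ext (by simp [g'])⟩
  refine mem_coboundaries₁_of_closure_eq_top hgen f (b.repr (f g') 0 • b 1) ?_
  rintro _ rfl
  rw [cocycles₁_apply_eq_smul_sub_of_swap b hn (Subtype.ext hg) hg0 hg1 f,
    swap_apply_sub_self b (s := (Rep.of _).ρ g') hg0 hg1]
  simp

theorem mem_coboundaries₁_iff_two_dvd {σ τ : G} (hgen : Subgroup.closure {σ, τ} = ⊤)
    {n : ℕ} (hn : n ≠ 0) (hσ : σ ^ (4 * n) = 1) (hτ : τ ^ 2 = 1)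
    (hσ0 : ρ σ (b 0) = b 1) (hσ1 : ρ σ (b 1) = b 0)
    (hτ0 : ρ τ (b 0) = -b 1) (hτ1 : ρ τ (b 1) = -b 0) (f : cocycles₁ (Rep.of ρ)) :
    ⇑f ∈ coboundaries₁ (Rep.of ρ) ↔ 2 ∣ b.repr (f σ) 0 + b.repr (f τ) 0 := by
  have hτ0' : (-ρ τ) (b 0) = b 1 := by simp [hτ0]
  have hτ1' : (-ρ τ) (b 1) = b 0 := by simp [hτ1]
  have hτx (x : M) : ρ τ x - x = -((-ρ τ) x + x) := by
    rw [LinearMap.neg_apply, neg_add, neg_neg, ← sub_eq_add_neg]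
  constructor
  · rintro ⟨x, hx⟩
    rw [← hx, d₀₁_hom_apply, d₀₁_hom_apply, Rep.of_ρ, hτx, swap_apply_sub_self b hσ0 hσ1,
      swap_apply_add_self b hτ0' hτ1']
    exact ⟨-b.repr x 0, by simp; ring⟩
  · have hfσ := cocycles₁_apply_eq_smul_sub_of_swap b hn hσ hσ0 hσ1 f
    have hfτ := cocycles₁_apply_eq_smul_add_of_neg_swap b hτ hτ0 hτ1 f
    set α := b.repr (f σ) 0
    set β := b.repr (f τ) 0
    rintro ⟨k, hk⟩
    -- `p • b 0 + q • b 1` with `q - p = α` and `-(p + q) = β`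
    refine mem_coboundaries₁_of_closure_eq_top hgen f ((-k) • b 0 + (α - k) • b 1) ?_
    simp only [Set.mem_insert_iff, Set.mem_singleton_iff, forall_eq_or_imp, forall_eq]
    constructor
    · rw [hfσ, swap_apply_sub_self b hσ0 hσ1]
      simp
    · rw [hfτ, hτx, swap_apply_add_self b hτ0' hτ1', eq_sub_of_add_eq' hk]
      simp
      module

variable (ρ) in
noncomputable def cocycleParity (σ τ : G) : cocycles₁ (Rep.of ρ) →ₗ[ℤ] ZMod 2 :=
  (Int.castAddHom (ZMod 2)).toIntLinearMap ∘ₗ b.coord 0 ∘ₗ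
    (LinearMap.proj (R := ℤ) (φ := fun _ : G => M) σ + LinearMap.proj τ) ∘ₗ
    (cocycles₁ (Rep.of ρ)).subtype

theorem cocycleParity_apply (σ τ : G) (f : cocycles₁ (Rep.of ρ)) :
    cocycleParity b ρ σ τ f = ((b.repr (f σ) 0 + b.repr (f τ) 0 : ℤ) : ZMod 2) := by
  simp [cocycleParity]

theorem cocycleParity_surjective {σ τ : G} (hgen : Subgroup.closure {σ, τ} = ⊤)
    (hσ0 : ρ σ (b 0) = b 1) (hσ1 : ρ σ (b 1) = b 0)
    (hτ0 : ρ τ (b 0) = -b 1) (hτ1 : ρ τ (b 1) = -b 0) :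
    Function.Surjective (cocycleParity b ρ σ τ) := by
  set w := b 0 - b 1
  have hσw : ρ σ w = -w := by rw [map_sub, hσ0, hσ1, neg_sub]
  have hτw : ρ τ w = w := by rw [map_sub, hτ0, hτ1, sub_neg_eq_add, neg_add_eq_sub]
  have hw := ρ.apply_eq_or_eq_neg_of_closure_eq_top hgen (w := w) (by
    simp only [Set.mem_insert_iff, Set.mem_singleton_iff, forall_eq_or_imp, forall_eq]
    exact ⟨.inr hσw, .inl hτw⟩)
  have hw0 : w ≠ -w := fun h => by simpa [w] using congrArg (fun v => b.repr v 0) h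
  let f : cocycles₁ (Rep.of ρ) := ⟨_, ite_mem_cocycles₁ hw hw0⟩
  have hf : cocycleParity b ρ σ τ f = 1 := by
    have hfσ : f σ = -w := if_neg (by rw [Rep.of_ρ, hσw]; exact hw0.symm)
    have hfτ : f τ = 0 := if_pos hτw
    rw [cocycleParity_apply, hfσ, hfτ]
    simp [w]
  intro z
  fin_cases z
  exacts [⟨0, map_zero _⟩, ⟨f, hf⟩]

end DihedralLattice

theorem dihedral_rank_two_lattice_h1_general
    (n : ℕ) (hn : 0 < n) {G : Type} [Group G] (σ τ : G)
    (hσ : σ ^ (4 * n) = 1) (hτ : τ ^ 2 = 1)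
    (hgen : Subgroup.closure {σ, τ} = ⊤)
    {M : Type} [AddCommGroup M] [Module ℤ M] (b : Module.Basis (Fin 2) ℤ M)
    (ρ : Representation ℤ G M)
    (hρσ0 : ρ σ (b 0) = b 1) (hρσ1 : ρ σ (b 1) = b 0)
    (hρτ0 : ρ τ (b 0) = - b 1) (hρτ1 : ρ τ (b 1) = - b 0) :
    (∀ x : groupCohomology.H1 (Rep.of (ρ.comp (Subgroup.zpowers σ).subtype)), x = 0) ∧
    Nonempty (groupCohomology.H1 (Rep.of ρ) ≃ₗ[ℤ] ZMod 2) := by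
  obtain rfl := (AddCommGroup.uniqueIntModule (M := M)).uniq ‹Module ℤ M›
  refine ⟨fun x => H1_induction_on x fun f =>
    (H1π_eq_zero_iff f).2 (mem_coboundaries₁_zpowers_of_swap b hn.ne' hσ hρσ0 hρσ1 f), ⟨?_⟩⟩
  have hker : LinearMap.ker (H1π (Rep.of ρ)).hom = LinearMap.ker (cocycleParity b ρ σ τ) := by
    ext f
    rw [LinearMap.mem_ker, LinearMap.mem_ker, H1π_eq_zero_iff, cocycleParity_apply,
      ZMod.intCast_zmod_eq_zero_iff_dvd,
      mem_coboundaries₁_iff_two_dvd b hgen hn.ne' hσ hτ hρσ0 hρσ1 hρτ0 hρτ1]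
    norm_cast
  have hπ := (ModuleCat.epi_iff_surjective (H1π (Rep.of ρ))).1 inferInstance
  exact (LinearMap.quotKerEquivOfSurjective _ hπ).symm ≪≫ₗ Submodule.quotEquivOfEq _ _ hker ≪≫ₗ
    LinearMap.quotKerEquivOfSurjective _ (cocycleParity_surjective b hgen hρσ0 hρσ1 hρτ0 hρτ1)

/-- Let `G = ⟨σ, τ⟩ ≅ D_{4n}` be the dihedral group of order `8n` and let
`M'' = ℤ·y₁ ⊕ ℤ·y₂` with `σ : y₁ ↔ y₂` and `τ : y₁ ↦ -y₂, y₂ ↦ -y₁`.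
Then `H¹(⟨σ⟩, M'') = 0` and `H¹(G, M'') ≅ ℤ/2ℤ`. -/
theorem dihedral_rank_two_lattice_h1
    (n : ℕ) (hn : 0 < n) {G : Type} [Group G] (σ τ : G)
    (hσ : σ ^ (4 * n) = 1) (hτ : τ ^ 2 = 1) (hrel : τ⁻¹ * σ * τ = σ⁻¹)
    (hgen : Subgroup.closure {σ, τ} = ⊤) (hcard : Nat.card G = 8 * n)
    {M : Type} [AddCommGroup M] [Module ℤ M] (b : Module.Basis (Fin 2) ℤ M)
    (ρ : Representation ℤ G M)
    (hρσ0 : ρ σ (b 0) = b 1) (hρσ1 : ρ σ (b 1) = b 0)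
    (hρτ0 : ρ τ (b 0) = - b 1) (hρτ1 : ρ τ (b 1) = - b 0) :
    (∀ x : groupCohomology.H1 (Rep.of (ρ.comp (Subgroup.zpowers σ).subtype)), x = 0) ∧
    Nonempty (groupCohomology.H1 (Rep.of ρ) ≃ₗ[ℤ] ZMod 2) :=
  dihedral_rank_two_lattice_h1_general n hn σ τ hσ hτ hgen b ρ hρσ0 hρσ1 hρτ0 hρτ1
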